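/- For a finite mixture of exponential survival curves S(t) = Σ_k p_k exp(-λ_k t) with distinct rates λ_k > 0 and weights p_k > 0, the observable hazard h_obs(t) = -S'(t)/S(t) is strictly decreasing in t whenever K ≥ 2. -/
import Mathlib


open Finset Real

lemma key_pos (a b s t : ℝ) (hst : s < t) (hab : a ≠ b) :
    0 < (a - b) * (Real.exp (-(a*s)) * Real.exp (-(b*t)) -
      Real.exp (-(a*t)) * Real.exp (-(b*s))) := by
  rw [← Real.exp_add, ← Real.exp_add]
  rcases hab.lt_or_gt with h | h
  · apply mul_pos_of_neg_of_neg (by linarith)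
    rw [sub_neg]
    exact Real.exp_lt_exp.2 (by nlinarith)
  · apply mul_pos (by linarith)
    rw [sub_pos]
    exact Real.exp_lt_exp.2 (by nlinarith)

lemma key_nonneg (a b s t : ℝ) (hst : s < t) :
    0 ≤ (a - b) * (Real.exp (-(a*s)) * Real.exp (-(b*t)) -
      Real.exp (-(a*t)) * Real.exp (-(b*s))) := by
  rcases eq_or_ne a b with rfl | hab
  · simp
  · exact (key_pos a b s t hst hab).le

/-- for a finite mixture of exponential survival curves with
distinct positive rates and positive weights, the observable hazard
`h_obs(t) = (∑ p_k λ_k e^{-λ_k t}) / (∑ p_k e^{-λ_k t})` is strictly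
decreasing on `[0,∞)` whenever `K ≥ 2`. -/
theorem exponential_mixture_hazard_strictAnti
    {K : ℕ} (hK : 2 ≤ K)
    (p : Fin K → ℝ) (hp : ∀ k, 0 < p k) (hsum : ∑ k, p k = 1)
    (l : Fin K → ℝ) (hl : ∀ k, 0 < l k) (hdist : Function.Injective l)
    (hobs : ℝ → ℝ)
    (hhobs : ∀ t, hobs t =
      (∑ k, p k * l k * Real.exp (-(l k * t))) /
      (∑ k, p k * Real.exp (-(l k * t)))) :
    StrictAntiOn hobs (Set.Ici 0) := by
  have hKpos : 0 < K := by omega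
  intro s _ t _ hst
  rw [hhobs s, hhobs t]
  have hne : (Finset.univ : Finset (Fin K)).Nonempty :=
    ⟨⟨0, hKpos⟩, Finset.mem_univ _⟩
  have hB : ∀ u : ℝ, 0 < ∑ k, p k * Real.exp (-(l k * u)) := fun u =>
    Finset.sum_pos (fun k _ => mul_pos (hp k) (Real.exp_pos _)) hne
  rw [div_lt_div_iff₀ (hB t) (hB s)]
  rw [Finset.sum_mul_sum, Finset.sum_mul_sum, ← sub_pos, ← Finset.sum_sub_distrib]
  simp_rw [← Finset.sum_sub_distrib]
  set F : Fin K → Fin K → ℝ := fun i j =>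
    p i * l i * Real.exp (-(l i * s)) * (p j * Real.exp (-(l j * t))) -
    p i * l i * Real.exp (-(l i * t)) * (p j * Real.exp (-(l j * s))) with hF
  have hcomm : ∑ i, ∑ j, F i j = ∑ i, ∑ j, F j i := Finset.sum_comm
  have htwo : (2:ℝ) * (∑ i, ∑ j, F i j) = ∑ i, ∑ j, (F i j + F j i) := by
    simp_rw [Finset.sum_add_distrib]
    rw [← hcomm]; ring
  have hGeq : ∀ i j, F i j + F j i =
      p i * p j * ((l i - l j) *
        (Real.exp (-(l i * s)) * Real.exp (-(l j * t)) -
         Real.exp (-(l i * t)) * Real.exp (-(l j * s)))) := by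
    intro i j; rw [hF]; ring
  have hpos : 0 < ∑ i, ∑ j, (F i j + F j i) := by
    have hinner_nonneg : ∀ i ∈ (Finset.univ : Finset (Fin K)),
        0 ≤ ∑ j, (F i j + F j i) := by
      intro i _
      refine Finset.sum_nonneg fun j _ => ?_
      rw [hGeq]
      exact mul_nonneg (mul_pos (hp i) (hp j)).le (key_nonneg _ _ _ _ hst)
    refine Finset.sum_pos' hinner_nonneg ⟨⟨0, hKpos⟩, Finset.mem_univ _, ?_⟩
    refine Finset.sum_pos' (fun j _ => ?_) ⟨⟨1, by omega⟩, Finset.mem_univ _, ?_⟩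
    · rw [hGeq]
      exact mul_nonneg (mul_pos (hp _) (hp j)).le (key_nonneg _ _ _ _ hst)
    · rw [hGeq]
      refine mul_pos (mul_pos (hp _) (hp _)) (key_pos _ _ _ _ hst ?_)
      intro h
      have := hdist h
      simp [Fin.ext_iff] at this
  linarith [htwo]
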